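/- arXiv:1002.0391 — 3 statements merged into one kernel-verified Lean document; each statement's English description precedes it below -/
import Mathlib

section
/- Let (A,m) be a Noetherian local ring of dimension d ≥ 1, M a finitely generated A-module, and L a submodule of M with dim L ≤ dim M − 1 and Ass(M/L) ⊆ Assh(M). Then L equals the unmixed component U_M(0) of (0) in M. -/
open IsLocalRing Filter

section Prelim

variable (A : Type*) [CommRing A]

/-- The length of a module, as the Krull dimension (longest chain) of its submodule lattice. -/
noncomputable def moduleLength (M : Type*) [AddCommGroup M] [Module A M] : WithBot ℕ∞ :=
  Order.krullDim (Submodule A M)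

/-- The (Krull) dimension of a module, as the dimension of `A / ann M`. -/
noncomputable def moduleDim (M : Type*) [AddCommGroup M] [Module A M] : WithBot ℕ∞ :=
  ringKrullDim (A ⧸ Module.annihilator A M)

/-- `Q` is a parameter ideal of the `d`-dimensional Noetherian local ring `A`:
it is generated by a system of `d` parameters, i.e. it is generated by `d` elements,
is proper, and is `m`-primary. -/
def IsParameterIdeal [IsLocalRing A] (d : ℕ) (Q : Ideal A) : Prop :=
  (∃ f : Fin d → A, Q = Ideal.span (Set.range f)) ∧ Q ≤ maximalIdeal A ∧
    ∃ n : ℕ, maximalIdeal A ^ n ≤ Q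

/-- `e 0, …, e d` are the Hilbert coefficients of the `m`-primary ideal `Q`, i.e.
`ℓ_A(A/Q^{n+1}) = Σ_{i=0}^{d} (-1)^i e_i binom(n+d-i, d-i)` for all `n ≫ 0`. -/
def IsHilbertCoeffs (d : ℕ) (Q : Ideal A) (e : ℕ → ℤ) : Prop :=
  ∀ᶠ n : ℕ in atTop, ∃ L : ℕ,
    moduleLength A (A ⧸ Q ^ (n + 1)) = (L : ℕ∞) ∧
    (L : ℤ) = ∑ i ∈ Finset.range (d + 1),
      (-1) ^ i * e i * ((n + d - i).choose (d - i) : ℤ)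

/-- A Noetherian local ring is Cohen–Macaulay iff some system of parameters is a
regular sequence, iff its depth equals its dimension. -/
def IsCMLocalRing : Prop :=
  IsLocalRing A ∧ IsNoetherianRing A ∧ ∃ d : ℕ, ringKrullDim A = ((d : ℕ∞) : WithBot ℕ∞) ∧
    ∃ rs : List A, rs.length = d ∧ (∀ x ∈ rs, ¬ IsUnit x) ∧
      RingTheory.Sequence.IsRegular A rs

/-- The depth of a Noetherian local ring: the supremum of lengths of regular
sequences contained in the maximal ideal. -/
noncomputable def ringDepth [IsLocalRing A] : ℕ∞ :=
  sSup {n : ℕ∞ | ∃ rs : List A, (rs.length : ℕ∞) = n ∧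
    (∀ x ∈ rs, x ∈ maximalIdeal A) ∧ RingTheory.Sequence.IsRegular A rs}

variable (M : Type*) [AddCommGroup M] [Module A M]

/-- `Assh(M)`: associated primes `p` of `M` with `dim A/p = dim M`. -/
def Assh : Set (Ideal A) :=
  {p ∈ associatedPrimes A M | ringKrullDim (A ⧸ p) = moduleDim A M}

/-- The unmixed component `U_M(0)` of `(0)` in `M`: the intersection of the primary
components of `(0)` corresponding to the associated primes `p` with `dim A/p = dim M`;
equivalently, the intersection over such `p` of the kernels of `M → M_p`. -/
noncomputable def unmixedComponent : Submodule A M :=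
  ⨅ p : {p : Ideal A // p ∈ Assh A M},
    haveI : p.1.IsPrime := p.2.1.1
    LinearMap.ker (LocalizedModule.mkLinearMap p.1.primeCompl M)

/-- The unmixed local rings: `dim Â/p = dim A` for every associated prime `p`
of the completion `Â`. -/
def IsUnmixedLocalRing [IsLocalRing A] : Prop :=
  ∀ p ∈ associatedPrimes (AdicCompletion (maximalIdeal A) A)
      (AdicCompletion (maximalIdeal A) A),
    ringKrullDim (AdicCompletion (maximalIdeal A) A ⧸ p) = ringKrullDim A

/-- A Noetherian local ring `A` is a Vasconcelos ring if either `dim A = 0`, or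
`dim A > 0` and `e₁(Q) = 0` for some parameter ideal `Q` of `A`. -/
def IsVasconcelosRing : Prop :=
  ∃ (hl : IsLocalRing A) (d : ℕ), IsNoetherianRing A ∧ ringKrullDim A = ((d : ℕ∞) : WithBot ℕ∞) ∧
    (d = 0 ∨ ∃ (Q : Ideal A) (e : ℕ → ℤ),
      @IsParameterIdeal A _ _ d Q ∧ IsHilbertCoeffs A d Q e ∧ e 1 = 0)

end Prelim

/-!
An element lies in `U_M(0)` iff for every `p ∈ Assh(M)` it is killed by some element outside `p`.
Since `dim A/p = dim M > dim L`, the annihilator of `L` is not contained in such a `p`, so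
`L ⊆ U_M(0)`. Conversely, if `x ∈ U_M(0)` had nonzero image in `M/L`, the annihilator of that
image would lie in some `p ∈ Ass(M/L) ⊆ Assh(M)`, yet contain an element outside `p` killing `x`.
-/

section

variable {A : Type*} [CommRing A] {M : Type*} [AddCommGroup M] [Module A M]

theorem ringKrullDim_quotient_le_moduleDim {p : Ideal A} (h : Module.annihilator A M ≤ p) :
    ringKrullDim (A ⧸ p) ≤ moduleDim A M :=
  ringKrullDim_le_of_surjective _ (Ideal.Quotient.factor_surjective h)

theorem mem_unmixedComponent_iff {x : M} :
    x ∈ unmixedComponent A M ↔ ∀ p ∈ Assh A M, ∃ s ∉ p, s • x = 0 := by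
  simp only [unmixedComponent, Submodule.mem_iInf, LocalizedModule.mem_ker_mkLinearMap_iff,
    Subtype.forall]
  rfl

theorem le_unmixedComponent_of_moduleDim_lt {L : Submodule A M}
    (hL : moduleDim A L < moduleDim A M) : L ≤ unmixedComponent A M := by
  intro x hx
  refine mem_unmixedComponent_iff.mpr fun p hp => ?_
  have hann : ¬ Module.annihilator A L ≤ p := fun hle =>
    ((ringKrullDim_quotient_le_moduleDim hle).trans_lt (hp.2 ▸ hL)).ne rfl
  obtain ⟨s, hsL, hsp⟩ := SetLike.not_le_iff_exists.mp hann
  exact ⟨s, hsp, congrArg Subtype.val (Module.mem_annihilator.mp hsL ⟨x, hx⟩)⟩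

theorem unmixedComponent_le_of_associatedPrimes_subset [IsNoetherianRing A] {L : Submodule A M}
    (hAss : associatedPrimes A (M ⧸ L) ⊆ Assh A M) : unmixedComponent A M ≤ L := by
  intro x hx
  by_contra hxL
  obtain ⟨p, hp, hcolon⟩ := exists_le_isAssociatedPrime_of_isNoetherianRing A
    (Submodule.Quotient.mk x : M ⧸ L) (by rwa [Ne, Submodule.Quotient.mk_eq_zero])
  obtain ⟨s, hsp, hsx⟩ := mem_unmixedComponent_iff.mp hx p (hAss hp)
  refine hsp (hcolon (Submodule.mem_colon_singleton.mpr ?_))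
  rw [← Submodule.Quotient.mk_smul, hsx, Submodule.Quotient.mk_zero, Submodule.mem_bot]

end

theorem stmt9_general (A : Type*) [CommRing A] [IsNoetherianRing A]
    (M : Type*) [AddCommGroup M] [Module A M]
    (L : Submodule A M)
    (hL : moduleDim A L < moduleDim A M)
    (hAss : associatedPrimes A (M ⧸ L) ⊆ Assh A M) :
    L = unmixedComponent A M :=
  le_antisymm (le_unmixedComponent_of_moduleDim_lt hL)
    (unmixedComponent_le_of_associatedPrimes_subset hAss)

/-- A submodule `L ⊆ M` with `dim L < dim M` and `Ass(M/L) ⊆ Assh(M)` is the unmixed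
component of `(0)` in `M`. -/
theorem stmt9 (A : Type*) [CommRing A] [IsLocalRing A] [IsNoetherianRing A]
    (d : ℕ) (hd : ringKrullDim A = ((d : ℕ∞) : WithBot ℕ∞)) (hdpos : 1 ≤ d)
    (M : Type*) [AddCommGroup M] [Module A M] [Module.Finite A M]
    (L : Submodule A M)
    (hL : moduleDim A L < moduleDim A M)
    (hAss : associatedPrimes A (M ⧸ L) ⊆ Assh A M) :
    L = unmixedComponent A M :=
  stmt9_general A M L hL hAss
end

section
/- A 1-dimensional Vasconcelos ring is Cohen–Macaulay; that is, if (A,m) is a Noetherian local ring of dimension 1 and e_1(Q) = 0 for some parameter ideal Q, then A is Cohen–Macaulay. -/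
open IsLocalRing Filter

/-!
Write `Q = (a)`. Multiplication by `a ^ k` identifies `(a ^ k) / (a ^ (k + 1))` with
`A / ((a ^ (k + 1)) : a ^ k)`, so `ℓ(A / Q ^ n)` is the sum over `k < n` of the lengths
`ℓ(A / ((a ^ (k + 1)) : a ^ k))`, an antitone sequence because the colon ideals increase with `k`.
Since `e₁(Q) = 0`, the partial sums are eventually `e₀ n`, which forces every term to equal
`e₀ = ℓ(A / Q)`, i.e. `(a ^ (k + 1)) : a ^ k = (a)` for all `k`. Then `a x = 0` puts `x` in every
`(a ^ k)`, hence `x = 0` by Krull's intersection theorem: `a` is a nonzerodivisor in the maximal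
ideal and `A` is Cohen–Macaulay.
-/

open Finset

theorem moduleLength_eq_length (A M : Type*) [CommRing A] [AddCommGroup M] [Module A M] :
    moduleLength A M = Module.length A M :=
  (Module.coe_length A M).symm

theorem Submodule.eq_of_le_of_length_quotient_eq {R M : Type*} [Ring R] [AddCommGroup M]
    [Module R M] {N N' : Submodule R M} (hle : N ≤ N')
    (hlen : Module.length R (M ⧸ N) = Module.length R (M ⧸ N'))
    (hfin : Module.length R (M ⧸ N) ≠ ⊤) : N = N' := by
  simp only [Module.length_quotient] at hlen hfin
  by_contra hne
  exact (Order.coheight_strictAnti (hle.lt_of_ne hne) (hlen ▸ hfin.lt_top)).ne hlen.symm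

theorem Ideal.length_quotient_eq_add_colon {A : Type*} [CommRing A] (I : Ideal A) (x : A) :
    Module.length A (A ⧸ I) =
      Module.length A (A ⧸ I.colon {x}) + Module.length A (A ⧸ (I ⊔ Ideal.span {x})) := by
  set f := LinearMap.toSpanSingleton A (A ⧸ I) (I.mkQ x)
  have hker : LinearMap.ker f = I.colon {x} := by
    ext r
    simp only [f, LinearMap.mem_ker, LinearMap.toSpanSingleton_apply, Submodule.mkQ_apply,
      ← Submodule.Quotient.mk_smul, Submodule.Quotient.mk_eq_zero, Submodule.mem_colon_singleton]
  have hrange : LinearMap.range f = (Submodule.span A {x}).map I.mkQ := by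
    rw [← LinearMap.span_singleton_eq_range, Submodule.map_span, Set.image_singleton]
  rw [Module.length_eq_add_of_exact _ _ (LinearMap.range f).subtype_injective
      (LinearMap.range f).mkQ_surjective (LinearMap.exact_subtype_mkQ _),
    ← hker, f.quotKerEquivRange.length_eq, hrange,
    (Submodule.quotientQuotientEquivQuotientSup I (Submodule.span A {x})).length_eq]

theorem Antitone.eq_of_sum_range_eventually_eq_mul {q : ℕ → ℕ} (hq : Antitone q) {c : ℕ}
    (h : ∀ᶠ n in atTop, ∑ k ∈ range n, q k = c * n) (k : ℕ) : q k = c := by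
  obtain ⟨N, hN⟩ := eventually_atTop.1 h
  have htail : ∀ n ≥ N, q n = c := fun n hn => by
    have hsucc := hN (n + 1) (by omega)
    rw [sum_range_succ, hN n hn] at hsucc
    linarith
  have hle : ∀ j, c ≤ q j := fun j =>
    htail (max j N) (le_max_right _ _) ▸ hq (le_max_left _ _)
  have hsum : ∑ _j ∈ range (max (k + 1) N), c = ∑ j ∈ range (max (k + 1) N), q j := by
    rw [hN _ (le_max_right _ _), sum_const, card_range, smul_eq_mul, mul_comm]
  exact ((sum_eq_sum_iff_of_le fun j _ => hle j).1 hsum k (mem_range.2 (by omega))).symm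

theorem ENat.eq_of_antitone_of_sum_range_eventually_eq_mul {q : ℕ → ℕ∞} (hq : Antitone q)
    {c : ℕ} (h : ∀ᶠ n in atTop, ∑ k ∈ range n, q k = c * n) (k : ℕ) : q k = c := by
  obtain ⟨n, hn, hpos⟩ := (h.and (eventually_gt_atTop 0)).exists
  have hsum_fin : ∑ k ∈ range n, q k ≠ ⊤ := hn ▸ by exact_mod_cast ENat.natCast_ne_top (c * n)
  have hfin (j : ℕ) : q j ≠ ⊤ := ne_top_of_le_ne_top hsum_fin <|
    (hq (Nat.zero_le j)).trans (single_le_sum (fun _ _ => zero_le) (mem_range.2 hpos))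
  lift q to ℕ → ℕ using hfin
  beta_reduce at h ⊢
  have hq' : Antitone q := fun i j hij => ENat.natCast_le_natCast.1 (hq hij)
  have h' : ∀ᶠ n in atTop, ∑ k ∈ range n, q k = c * n := h.mono fun n hn => by exact_mod_cast hn
  exact congrArg _ (hq'.eq_of_sum_range_eventually_eq_mul h' k)

section PowColon

variable {A : Type*} [CommRing A] (a : A)

def powColon (k : ℕ) : Ideal A := (Ideal.span {a ^ (k + 1)}).colon {a ^ k}

variable {a} in
theorem mem_powColon {k : ℕ} {y : A} :
    y ∈ powColon a k ↔ y * a ^ k ∈ Ideal.span {a ^ (k + 1)} :=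
  Submodule.mem_colon_singleton

theorem powColon_zero : powColon a 0 = Ideal.span {a} := by
  ext y
  simp [mem_powColon]

theorem span_le_powColon (k : ℕ) : Ideal.span {a} ≤ powColon a k := by
  intro y hy
  obtain ⟨z, rfl⟩ := Ideal.mem_span_singleton'.1 hy
  exact mem_powColon.2 (Ideal.mem_span_singleton'.2 ⟨z, by ring⟩)

theorem powColon_mono : Monotone (powColon a) := by
  refine monotone_nat_of_le_succ fun k y hy => ?_
  obtain ⟨z, hz⟩ := Ideal.mem_span_singleton'.1 (mem_powColon.1 hy)
  exact mem_powColon.2 (Ideal.mem_span_singleton'.2 ⟨z, by linear_combination a * hz⟩)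

theorem length_quotient_span_pow_succ (k : ℕ) :
    Module.length A (A ⧸ Ideal.span {a ^ (k + 1)}) =
      Module.length A (A ⧸ powColon a k) + Module.length A (A ⧸ Ideal.span {a ^ k}) := by
  rw [Ideal.length_quotient_eq_add_colon _ (a ^ k), sup_eq_right.2]
  · rfl
  exact Ideal.span_singleton_le_span_singleton.2 (pow_dvd_pow a k.le_succ)

theorem length_quotient_span_pow (n : ℕ) :
    Module.length A (A ⧸ Ideal.span {a ^ n}) =
      ∑ k ∈ range n, Module.length A (A ⧸ powColon a k) := by
  induction n with
  | zero => simp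
  | succ n ih => rw [length_quotient_span_pow_succ, ih, sum_range_succ, add_comm]

theorem antitone_length_quotient_powColon :
    Antitone fun k => Module.length A (A ⧸ powColon a k) := fun _ _ hkl => by
  simp only [Module.length_quotient]
  exact Order.coheight_anti (powColon_mono a hkl)

theorem isSMulRegular_of_powColon_le [IsNoetherianRing A] [IsLocalRing A]
    (ha : a ∈ maximalIdeal A) (h : ∀ k, powColon a k ≤ Ideal.span {a}) :
    IsSMulRegular A a := by
  refine IsSMulRegular.of_right_eq_zero_of_smul fun x hx => ?_
  have hpow : ∀ k, x ∈ Ideal.span {a} ^ k := by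
    intro k
    induction k with
    | zero => simp
    | succ k ih =>
      rw [Ideal.span_singleton_pow, Ideal.mem_span_singleton'] at ih ⊢
      obtain ⟨y, rfl⟩ := ih
      have hy0 : y * a ^ (k + 1) = 0 := by rw [← hx, smul_eq_mul]; ring
      have : y ∈ powColon a (k + 1) := mem_powColon.2 (by rw [hy0]; exact zero_mem _)
      obtain ⟨z, rfl⟩ := Ideal.mem_span_singleton'.1 (h _ this)
      exact ⟨z, by ring⟩
  have hne : Ideal.span {a} ≠ ⊤ := Ideal.span_singleton_ne_top ((mem_maximalIdeal a).1 ha)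
  have hx : x ∈ ⨅ k, Ideal.span {a} ^ k := Submodule.mem_iInf _ |>.2 hpow
  rwa [Ideal.iInf_pow_eq_bot_of_isLocalRing _ hne, Ideal.mem_bot] at hx

end PowColon

theorem isCMLocalRing_of_isSMulRegular {A : Type*} [CommRing A] [IsLocalRing A]
    [IsNoetherianRing A] (hd : ringKrullDim A = ((1 : ℕ∞) : WithBot ℕ∞)) {a : A}
    (ha : a ∈ maximalIdeal A) (hreg : IsSMulRegular A a) : IsCMLocalRing A := by
  refine ⟨‹_›, ‹_›, 1, by exact_mod_cast hd, [a], rfl, by simpa using ha, ?_, ?_⟩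
  · exact (RingTheory.Sequence.isWeaklyRegular_singleton_iff A a).2 hreg
  · rw [Ideal.ofList_singleton, Ideal.smul_eq_mul, Ideal.mul_top]
    exact (Ideal.span_singleton_ne_top ((mem_maximalIdeal a).1 ha)).symm

theorem IsHilbertCoeffs.exists_length_eventually_eq_mul {A : Type*} [CommRing A] {Q : Ideal A}
    {e : ℕ → ℤ} (he : IsHilbertCoeffs A 1 Q e) (he1 : e 1 = 0) :
    ∃ c : ℕ, ∀ᶠ n : ℕ in atTop, Module.length A (A ⧸ Q ^ n) = c * n := by
  obtain ⟨N, hN⟩ := eventually_atTop.1 he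
  have hlen : ∀ m ≥ N, ∃ L : ℕ,
      Module.length A (A ⧸ Q ^ (m + 1)) = L ∧ (L : ℤ) = e 0 * (m + 1) := by
    intro m hm
    obtain ⟨L, hL, hLe⟩ := hN m hm
    refine ⟨L, by exact_mod_cast (moduleLength_eq_length A _).symm.trans hL, ?_⟩
    simpa [sum_range_succ, he1] using hLe
  obtain ⟨L, -, hL⟩ := hlen N le_rfl
  have he0 : 0 ≤ e 0 := by nlinarith [Int.natCast_nonneg L]
  refine ⟨(e 0).toNat, eventually_atTop.2 ⟨N + 1, fun n hn => ?_⟩⟩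
  obtain ⟨m, rfl⟩ : ∃ m, n = m + 1 := ⟨n - 1, by omega⟩
  obtain ⟨L, hlenL, hL⟩ := hlen m (by omega)
  rw [hlenL]
  exact_mod_cast (show (L : ℤ) = (e 0).toNat * (m + 1) by rw [Int.toNat_of_nonneg he0, hL])

/-- A one-dimensional Vasconcelos ring is Cohen–Macaulay. -/
theorem stmt10 (A : Type*) [CommRing A] [IsLocalRing A] [IsNoetherianRing A]
    (hd : ringKrullDim A = ((1 : ℕ∞) : WithBot ℕ∞))
    (Q : Ideal A) (hQ : IsParameterIdeal A 1 Q)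
    (e : ℕ → ℤ) (he : IsHilbertCoeffs A 1 Q e) (he1 : e 1 = 0) :
    IsCMLocalRing A := by
  obtain ⟨⟨f, hQf⟩, hQm, -⟩ := hQ
  set a := f 0
  have hQa : Q = Ideal.span {a} := by rw [hQf, Set.range_unique]; rfl
  have ha : a ∈ maximalIdeal A := hQm (hQa ▸ Ideal.mem_span_singleton_self a)
  obtain ⟨c, hc⟩ := he.exists_length_eventually_eq_mul he1
  have hsum : ∀ᶠ n in atTop, ∑ k ∈ range n, Module.length A (A ⧸ powColon a k) = c * n :=
    hc.mono fun n hn => by rwa [← length_quotient_span_pow, ← Ideal.span_singleton_pow, ← hQa]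
  have hconst := ENat.eq_of_antitone_of_sum_range_eventually_eq_mul
    (antitone_length_quotient_powColon a) hsum
  have hcolon (k : ℕ) : powColon a k ≤ Ideal.span {a} := by
    refine (Submodule.eq_of_le_of_length_quotient_eq (span_le_powColon a k) ?_ ?_).ge
    · rw [← powColon_zero, hconst, hconst]
    · rw [← powColon_zero, hconst]
      exact ENat.natCast_ne_top c
  exact isCMLocalRing_of_isSMulRegular hd ha (isSMulRegular_of_powColon_le a ha hcolon)
end

section
/- Let (A,m) be a Noetherian local ring of dimension d ≥ 2. Then A is a Vasconcelos ring if and only if A/H^0_m(A) is a Vasconcelos ring. -/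
/-!
A power `m^s` of the maximal ideal kills `H = H⁰_m(A)`. Hence `H` has finite length `c`, and,
since `dim A > 0`, `H` lies in every prime, so `dim A/H = dim A`. By Artin–Rees `Q^n ∩ H = 0`
for `n ≫ 0`, so `ℓ(A/Q^n) = c + ℓ(A/(Q^n + H))`: the Hilbert functions of `Q` and of `QA/H`
differ by the constant `c`, which only changes `e_d`, and `d ≥ 2` leaves `e_1` untouched.
Parameter ideals of `A/H` lift to parameter ideals of `A` because `m^s` kills `H`.
-/


open IsLocalRing Filter

/-- `H⁰_m(A)`: the ideal of elements annihilated by a power of the maximal ideal. -/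
noncomputable def zerothLocalCohomology (A : Type*) [CommRing A] [IsLocalRing A] : Ideal A :=
  ⨆ n : ℕ, Submodule.colon ⊥ ((IsLocalRing.maximalIdeal A ^ n : Ideal A) : Set A)

section Length

lemma Module.length_quotient_eq_length_add_of_inf_eq_bot {R M : Type*} [Ring R] [AddCommGroup M]
    [Module R M] {N K : Submodule R M} (h : N ⊓ K = ⊥) :
    Module.length R (M ⧸ N) = Module.length R K + Module.length R (M ⧸ (N ⊔ K)) := by
  refine Module.length_eq_add_of_exact (N.mkQ ∘ₗ K.subtype) (Submodule.factor le_sup_left) ?_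
    (Submodule.factor_surjective _) ?_
  · rw [← LinearMap.ker_eq_bot, LinearMap.ker_comp, Submodule.ker_mkQ,
      ← Submodule.disjoint_iff_comap_eq_bot, disjoint_iff, inf_comm, h]
  · intro y
    obtain ⟨x, rfl⟩ := N.mkQ_surjective y
    rw [Submodule.factor_mk, Submodule.mkQ_apply, Submodule.Quotient.mk_eq_zero, Submodule.mem_sup]
    constructor
    · rintro ⟨n, hn, k, hk, rfl⟩
      exact ⟨⟨k, hk⟩, (Submodule.Quotient.eq N).mpr (by simpa using hn)⟩
    · rintro ⟨⟨k, hk⟩, hkx⟩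
      have hxk : x - k ∈ N := by simpa using (Submodule.Quotient.eq N).mp hkx.symm
      exact ⟨x - k, hxk, k, hk, sub_add_cancel x k⟩

variable {A : Type*} [CommRing A]

lemma Module.length_quotient_map_mk (H I : Ideal A) :
    Module.length (A ⧸ H) ((A ⧸ H) ⧸ I.map (Ideal.Quotient.mk H)) =
      Module.length A (A ⧸ (H ⊔ I)) := by
  rw [← Module.length_eq_of_surjective (S := A) Ideal.Quotient.mk_surjective]
  exact (DoubleQuot.quotQuotEquivQuotSupₐ A H I).toLinearEquiv.length_eq

variable [IsNoetherianRing A] {I J H : Ideal A} {s : ℕ}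

lemma Ideal.eventually_pow_inf_eq_bot (hIJ : I ≤ J) (hH : J ^ s * H = ⊥) :
    ∀ᶠ n in atTop, I ^ n ⊓ H = ⊥ := by
  obtain ⟨k, hk⟩ := Ideal.exists_pow_inf_eq_pow_smul I (H : Submodule A A)
  filter_upwards [eventually_ge_atTop (k + s)] with n hn
  have hAR := hk n (by omega)
  simp only [Ideal.smul_eq_mul, Ideal.mul_top] at hAR
  rw [eq_bot_iff, ← hH]
  calc I ^ n ⊓ H = I ^ (n - k) * (I ^ k ⊓ H) := hAR
    _ ≤ I ^ (n - k) * H := Ideal.mul_mono_right inf_le_right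
    _ ≤ J ^ s * H := Ideal.mul_mono_left
      ((Ideal.pow_right_mono hIJ _).trans (Ideal.pow_le_pow_right (by omega)))

lemma Ideal.eventually_length_quotient_pow_eq (hIJ : I ≤ J) (hH : J ^ s * H = ⊥) :
    ∀ᶠ n in atTop, Module.length A (A ⧸ I ^ n) =
      Module.length A H + Module.length (A ⧸ H) ((A ⧸ H) ⧸ I.map (Ideal.Quotient.mk H) ^ n) := by
  filter_upwards [Ideal.eventually_pow_inf_eq_bot hIJ hH] with n hn
  rw [← Ideal.map_pow, Module.length_quotient_map_mk, sup_comm]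
  exact Module.length_quotient_eq_length_add_of_inf_eq_bot hn

end Length

lemma ringKrullDim_quotient_eq_of_forall_le {R : Type*} [CommRing R] {I : Ideal R}
    (hI : ∀ p : Ideal R, p.IsPrime → I ≤ p) : ringKrullDim (R ⧸ I) = ringKrullDim R := by
  have : PrimeSpectrum.zeroLocus (R := R) I = Set.univ :=
    Set.eq_univ_of_forall fun p => hI p.asIdeal p.isPrime
  rw [ringKrullDim_quotient, this, Order.krullDim_eq_of_orderIso (OrderIso.Set.univ)]
  rfl

namespace IsLocalRing

variable {A : Type*} [CommRing A] [IsLocalRing A]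

lemma le_of_maximalIdeal_pow_mul_eq_bot {H : Ideal A} {s : ℕ} (hH : maximalIdeal A ^ s * H = ⊥)
    (hdim : 0 < ringKrullDim A) (p : Ideal A) (hp : p.IsPrime) : H ≤ p := by
  have hle : ∀ q : Ideal A, q.IsPrime → ¬ maximalIdeal A ≤ q → H ≤ q := fun q hq hmq =>
    (hq.mul_le.mp (hH.trans_le bot_le)).resolve_left (mt hq.le_of_pow_le hmq)
  obtain ⟨q, q', hqq'⟩ := Order.krullDim_pos_iff.mp hdim
  have hq : ¬ maximalIdeal A ≤ q.asIdeal := fun h =>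
    hqq'.not_ge (le_maximalIdeal q'.isPrime.ne_top |>.trans h)
  by_cases hmp : maximalIdeal A ≤ p
  · exact (hle _ q.isPrime hq).trans ((le_maximalIdeal q.isPrime.ne_top).trans hmp)
  · exact hle p hp hmp

variable [IsNoetherianRing A]

variable (A) in
lemma exists_maximalIdeal_pow_mul_zerothLocalCohomology_eq_bot :
    ∃ s, maximalIdeal A ^ s * zerothLocalCohomology A = ⊥ := by
  let f : ℕ →o Ideal A :=
    ⟨fun n => Submodule.colon ⊥ ((maximalIdeal A ^ n : Ideal A) : Set A),
      fun _ _ h => Submodule.colon_mono le_rfl (Ideal.pow_le_pow_right h)⟩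
  refine ⟨monotonicSequenceLimitIndex f, eq_bot_iff.mpr (Ideal.mul_le.mpr fun r hr x hx => ?_)⟩
  replace hx : x ∈ iSup f := hx
  rw [WellFoundedGT.iSup_eq_monotonicSequenceLimit] at hx
  rw [mul_comm]
  exact Submodule.mem_colon.mp hx r hr

lemma isArtinianRing_quotient_of_pow_le {I : Ideal A} {n : ℕ}
    (hI : I ≤ maximalIdeal A) (hn : maximalIdeal A ^ n ≤ I) : IsArtinianRing (A ⧸ I) :=
  quotient_artinian_of_mem_minimalPrimes_of_isLocalRing I
    ⟨⟨inferInstance, hI⟩, fun _ ⟨hp, hIp⟩ _ => hp.le_of_pow_le (hn.trans hIp)⟩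

lemma length_quotient_ne_top_of_pow_le {I : Ideal A} {n : ℕ}
    (hI : I ≤ maximalIdeal A) (hn : maximalIdeal A ^ n ≤ I) :
    Module.length A (A ⧸ I) ≠ ⊤ := by
  have := isArtinianRing_quotient_of_pow_le hI hn
  rw [Module.length_eq_of_surjective (R := A ⧸ I) Ideal.Quotient.mk_surjective]
  exact Module.length_ne_top

lemma length_ne_top_of_maximalIdeal_pow_mul_eq_bot {H : Ideal A} {s : ℕ}
    (hH : maximalIdeal A ^ s * H = ⊥) : Module.length A H ≠ ⊤ := by
  obtain ⟨n, hn, hn1⟩ :=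
    ((Ideal.eventually_length_quotient_pow_eq le_rfl hH).and (eventually_ge_atTop 1)).exists
  have hfin := length_quotient_ne_top_of_pow_le
    (Ideal.pow_le_self (I := maximalIdeal A) (n := n) (by omega)) le_rfl
  rw [hn] at hfin
  exact (WithTop.add_ne_top.mp hfin).1

end IsLocalRing

section Parameter

variable {A B : Type*} [CommRing A] [IsLocalRing A] [CommRing B] [IsLocalRing B] {d : ℕ}

lemma IsParameterIdeal.map {Q : Ideal A} (hQ : IsParameterIdeal A d Q) (f : A →+* B)
    (hf : Function.Surjective f) : IsParameterIdeal B d (Q.map f) := by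
  obtain ⟨⟨g, rfl⟩, hQm, n, hn⟩ := hQ
  have hm := map_maximalIdeal_of_surjective f hf
  refine ⟨⟨f ∘ g, by rw [Ideal.map_span, Set.range_comp]⟩, hm ▸ Ideal.map_mono hQm, n, ?_⟩
  rw [← hm, ← Ideal.map_pow]
  exact Ideal.map_mono hn

lemma IsParameterIdeal.exists_map_eq {H : Ideal A} {s : ℕ} [IsLocalRing (A ⧸ H)]
    (hH : maximalIdeal A ^ s * H = ⊥) {Q' : Ideal (A ⧸ H)}
    (hQ' : IsParameterIdeal (A ⧸ H) d Q') :
    ∃ Q : Ideal A, IsParameterIdeal A d Q ∧ Q.map (Ideal.Quotient.mk H) = Q' := by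
  obtain ⟨⟨g', rfl⟩, hQm, n, hn⟩ := hQ'
  have hsurj : Function.Surjective (Ideal.Quotient.mk H) := Ideal.Quotient.mk_surjective
  have := IsLocalHom.of_surjective _ hsurj
  choose g hg using fun i => hsurj (g' i)
  set Q := Ideal.span (Set.range g)
  have hmap : Q.map (Ideal.Quotient.mk H) = Ideal.span (Set.range g') := by
    rw [Ideal.map_span, ← Set.range_comp, show Ideal.Quotient.mk H ∘ g = g' from funext hg]
  rw [← hmap] at hQm hn
  have hQH : maximalIdeal A ^ n ≤ Q ⊔ H := by
    rw [← Ideal.mk_ker (I := H), ← Ideal.comap_map_of_surjective' _ hsurj]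
    refine Ideal.map_le_iff_le_comap.mp ?_
    rw [Ideal.map_pow, map_maximalIdeal_of_surjective _ hsurj]
    exact hn
  refine ⟨Q, ⟨⟨g, rfl⟩, ?_, n + s, ?_⟩, hmap⟩
  · rw [← maximalIdeal_comap (Ideal.Quotient.mk H)]
    exact Ideal.map_le_iff_le_comap.mp hQm
  · calc maximalIdeal A ^ (n + s) = maximalIdeal A ^ s * maximalIdeal A ^ n := by
          rw [pow_add, mul_comm]
      _ ≤ maximalIdeal A ^ s * (Q ⊔ H) := Ideal.mul_mono_right hQH
      _ = maximalIdeal A ^ s * Q := by rw [Ideal.mul_sup, hH, sup_bot_eq]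
      _ ≤ Q := Ideal.mul_le_right

end Parameter

section Hilbert

def hilbertSamuelEval (d : ℕ) (e : ℕ → ℤ) (n : ℕ) : ℤ :=
  ∑ i ∈ Finset.range (d + 1), (-1) ^ i * e i * ((n + d - i).choose (d - i) : ℤ)

lemma hilbertSamuelEval_update_self (d : ℕ) (e : ℕ → ℤ) (v : ℤ) (n : ℕ) :
    hilbertSamuelEval d (Function.update e d v) n =
      hilbertSamuelEval d e n + (-1) ^ d * (v - e d) := by
  have hd : d ∈ Finset.range (d + 1) := Finset.self_mem_range_succ d
  unfold hilbertSamuelEval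
  rw [← Finset.add_sum_erase _ _ hd, ← Finset.add_sum_erase _ _ hd,
    Finset.sum_congr rfl fun i hi => by rw [Function.update_of_ne (Finset.ne_of_mem_erase hi)]]
  simp only [Function.update_self, Nat.sub_self, Nat.choose_zero_right, Nat.cast_one]
  ring

lemma hilbertSamuelEval_update_add (d : ℕ) (e : ℕ → ℤ) (c : ℤ) (n : ℕ) :
    hilbertSamuelEval d (Function.update e d (e d + (-1) ^ d * c)) n =
      c + hilbertSamuelEval d e n := by
  rw [hilbertSamuelEval_update_self, add_sub_cancel_left, ← mul_assoc, ← pow_add, ← two_mul,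
    pow_mul]
  simp [add_comm]

lemma isHilbertCoeffs_iff (A : Type*) [CommRing A] (d : ℕ) (Q : Ideal A) (e : ℕ → ℤ) :
    IsHilbertCoeffs A d Q e ↔ ∀ᶠ n in atTop, ∃ L : ℕ,
      Module.length A (A ⧸ Q ^ (n + 1)) = L ∧ (L : ℤ) = hilbertSamuelEval d e n := by
  simp only [IsHilbertCoeffs, moduleLength, ← Module.coe_length, WithBot.coe_inj]
  rfl

lemma Filter.eventually_eq_natCast_iff_of_eq_add {f g : ℕ → ℕ∞} {P R : ℕ → ℤ} (c : ℕ)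
    (hfg : ∀ᶠ n in atTop, f n = c + g n) (hPR : ∀ n, P n = c + R n) :
    (∀ᶠ n in atTop, ∃ L : ℕ, f n = L ∧ (L : ℤ) = P n) ↔
      ∀ᶠ n in atTop, ∃ L : ℕ, g n = L ∧ (L : ℤ) = R n := by
  constructor
  · intro h
    filter_upwards [h, hfg] with n ⟨L, hfL, hLP⟩ hn
    have hg : g n ≠ ⊤ := fun hg => by simp [hg] at hn; simp [hn] at hfL
    obtain ⟨L', hL'⟩ := ENat.ne_top_iff_exists.mp hg
    refine ⟨L', hL'.symm, ?_⟩
    rw [hn, ← hL', ← Nat.cast_add, Nat.cast_inj] at hfL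
    rw [hPR, ← hfL] at hLP
    push_cast at hLP
    omega
  · intro h
    filter_upwards [h, hfg] with n ⟨L, hgL, hLR⟩ hn
    exact ⟨c + L, by rw [hn, hgL]; push_cast; rfl, by push_cast; rw [hPR, hLR]⟩

lemma isHilbertCoeffs_quotient_iff {A : Type*} [CommRing A] [IsNoetherianRing A]
    {I J H : Ideal A} {s c d : ℕ} (hIJ : I ≤ J) (hH : J ^ s * H = ⊥)
    (hc : Module.length A H = c) (e : ℕ → ℤ) :
    IsHilbertCoeffs A d I (Function.update e d (e d + (-1) ^ d * c)) ↔
      IsHilbertCoeffs (A ⧸ H) d (I.map (Ideal.Quotient.mk H)) e := by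
  rw [isHilbertCoeffs_iff, isHilbertCoeffs_iff]
  refine Filter.eventually_eq_natCast_iff_of_eq_add c ?_ (hilbertSamuelEval_update_add d e c)
  rw [← hc]
  exact (tendsto_add_atTop_nat 1).eventually (Ideal.eventually_length_quotient_pow_eq hIJ hH)

end Hilbert

lemma isVasconcelosRing_iff {A : Type*} [CommRing A] [IsLocalRing A] [IsNoetherianRing A]
    {d : ℕ} (hd : ringKrullDim A = ((d : ℕ∞) : WithBot ℕ∞)) (hd0 : d ≠ 0) :
    IsVasconcelosRing A ↔
      ∃ (Q : Ideal A) (e : ℕ → ℤ), IsParameterIdeal A d Q ∧ IsHilbertCoeffs A d Q e ∧ e 1 = 0 := by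
  constructor
  · rintro ⟨_, d', -, hd', h⟩
    obtain rfl : d' = d := by rw [hd] at hd'; exact_mod_cast hd'.symm
    exact h.resolve_left hd0
  · exact fun h => ⟨inferInstance, d, inferInstance, hd, Or.inr h⟩

/-- For `d ≥ 2`, `A` is a Vasconcelos ring iff `A/H⁰_m(A)` is a Vasconcelos ring. -/
theorem stmt11 (A : Type*) [CommRing A] [IsLocalRing A] [IsNoetherianRing A]
    (d : ℕ) (hd : ringKrullDim A = ((d : ℕ∞) : WithBot ℕ∞)) (hd2 : 2 ≤ d) :
    IsVasconcelosRing A ↔ IsVasconcelosRing (A ⧸ zerothLocalCohomology A) := by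
  set H := zerothLocalCohomology A
  obtain ⟨s, hs⟩ := exists_maximalIdeal_pow_mul_zerothLocalCohomology_eq_bot A
  have hHp := le_of_maximalIdeal_pow_mul_eq_bot hs (by rw [hd]; exact_mod_cast (by omega : 0 < d))
  have : Nontrivial (A ⧸ H) := Ideal.Quotient.nontrivial_iff.mpr <|
    ne_top_of_le_ne_top (maximalIdeal.isMaximal A).ne_top (hHp _ (maximalIdeal.isMaximal A).isPrime)
  have := IsLocalRing.of_surjective' (Ideal.Quotient.mk H) Ideal.Quotient.mk_surjective
  obtain ⟨c, hc⟩ := ENat.ne_top_iff_exists.mp (length_ne_top_of_maximalIdeal_pow_mul_eq_bot hs)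
  rw [isVasconcelosRing_iff hd (by omega),
    isVasconcelosRing_iff ((ringKrullDim_quotient_eq_of_forall_le hHp).trans hd) (by omega)]
  have h1d : 1 ≠ d := by omega
  constructor
  · rintro ⟨Q, e, hQ, he, he1⟩
    refine ⟨Q.map (Ideal.Quotient.mk H), Function.update e d (e d - (-1) ^ d * c),
      hQ.map _ Ideal.Quotient.mk_surjective,
      (isHilbertCoeffs_quotient_iff hQ.2.1 hs hc.symm _).mp ?_,
      by rwa [Function.update_of_ne h1d]⟩
    simpa [Function.update_idem] using he
  · rintro ⟨Q', e, hQ', he, he1⟩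
    obtain ⟨Q, hQ, rfl⟩ := hQ'.exists_map_eq hs
    exact ⟨Q, _, hQ, (isHilbertCoeffs_quotient_iff hQ.2.1 hs hc.symm e).mpr he,
      by rwa [Function.update_of_ne h1d]⟩
end
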